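/- arXiv:2409.00367 — 2 statements merged into one kernel-verified Lean document; each statement's English description precedes it below -/
import Mathlib

section
/- Let (Ω, 𝓕, P) be a probability space, ε ∈ (0,1) (strictly less than 1), and X : Ω → ℝ an integrable random variable. Then the function g(β) = β + ε⁻¹ · E_P[max(X − β, 0)] attains its infimum: there exists β* ∈ ℝ with g(β*) = inf_{β ∈ ℝ} g(β). In particular g(β) → +∞ as β → +∞ and as β → −∞. -/
open MeasureTheory Filter

lemma cvar_int {Ω : Type*} [MeasurableSpace Ω] (P : Measure Ω) [IsFiniteMeasure P]
    (X : Ω → ℝ) (hX : Integrable X P) (β : ℝ) :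
    Integrable (fun ω => max (X ω - β) 0) P :=
  (hX.sub (integrable_const β)).pos_part

lemma cvar_lip {Ω : Type*} [MeasurableSpace Ω] (P : Measure Ω) [IsProbabilityMeasure P]
    (X : Ω → ℝ) (hX : Integrable X P) :
    LipschitzWith 1 (fun β : ℝ => ∫ ω, max (X ω - β) 0 ∂P) := by
  apply LipschitzWith.of_dist_le_mul
  intro β β'
  simp only [Real.dist_eq, NNReal.coe_one, one_mul]
  rw [← integral_sub (cvar_int P X hX β) (cvar_int P X hX β')]
  calc |∫ ω, (max (X ω - β) 0 - max (X ω - β') 0) ∂P|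
      ≤ ∫ ω, |max (X ω - β) 0 - max (X ω - β') 0| ∂P := by
        simpa [Real.norm_eq_abs] using
          norm_integral_le_integral_norm (fun ω => max (X ω - β) 0 - max (X ω - β') 0) (μ := P)
    _ ≤ ∫ _ω, |β - β'| ∂P := by
        apply integral_mono ((cvar_int P X hX β).sub (cvar_int P X hX β')).abs
          (integrable_const _)
        intro ω
        calc |max (X ω - β) 0 - max (X ω - β') 0|
            ≤ |(X ω - β) - (X ω - β')| := abs_max_sub_max_le_abs _ _ 0
          _ = |β - β'| := by rw [show (X ω - β) - (X ω - β') = -(β - β') by ring, abs_neg]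
    _ = |β - β'| := by simp

/-- The CVaR objective g(β) = β + ε⁻¹·E[max(X − β, 0)] attains its infimum for ε ∈ (0,1),
and tends to +∞ as β → ±∞. -/
theorem cvar_objective_attains_inf {Ω : Type*} [MeasurableSpace Ω]
    (P : Measure Ω) [IsProbabilityMeasure P]
    (ε : ℝ) (hε : ε ∈ Set.Ioo (0 : ℝ) 1)
    (X : Ω → ℝ) (hX : Integrable X P) :
    (∃ βs : ℝ,
        (fun β : ℝ => β + ε⁻¹ * ∫ ω, max (X ω - β) 0 ∂P) βs
          = ⨅ β : ℝ, (fun β : ℝ => β + ε⁻¹ * ∫ ω, max (X ω - β) 0 ∂P) β)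
      ∧ Tendsto (fun β : ℝ => β + ε⁻¹ * ∫ ω, max (X ω - β) 0 ∂P) atTop atTop
      ∧ Tendsto (fun β : ℝ => β + ε⁻¹ * ∫ ω, max (X ω - β) 0 ∂P) atBot atTop := by
  obtain ⟨hε0, hε1⟩ := hε
  set g : ℝ → ℝ := fun β => β + ε⁻¹ * ∫ ω, max (X ω - β) 0 ∂P with hg
  have hεinv : (0:ℝ) < ε⁻¹ := inv_pos.mpr hε0
  have hcont : Continuous g :=
    continuous_id.add (continuous_const.mul (cvar_lip P X hX).continuous)
  have hge : ∀ β, β ≤ g β := by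
    intro β
    have h0 : 0 ≤ ∫ ω, max (X ω - β) 0 ∂P :=
      integral_nonneg fun ω => le_max_right _ _
    simp only [hg]
    nlinarith
  have htop : Tendsto g atTop atTop := tendsto_atTop_mono hge tendsto_id
  have hge2 : ∀ β, (1 - ε⁻¹) * β + ε⁻¹ * ∫ ω, X ω ∂P ≤ g β := by
    intro β
    have h1 : (∫ ω, X ω ∂P) - β ≤ ∫ ω, max (X ω - β) 0 ∂P := by
      have h2 := integral_mono (hX.sub (integrable_const β)) (cvar_int P X hX β)
        (fun ω => le_max_left (X ω - β) 0)
      rw [show (X - fun _ => β) = (fun ω => X ω - β) from rfl,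
        integral_sub hX (integrable_const β)] at h2
      simpa using h2
    have h3 := mul_le_mul_of_nonneg_left h1 hεinv.le
    simp only [hg]
    nlinarith
  have hbot : Tendsto g atBot atTop := by
    apply tendsto_atTop_mono hge2
    apply Tendsto.atTop_add _ tendsto_const_nhds
    have hneg : 1 - ε⁻¹ < 0 := by
      have : 1 < ε⁻¹ := (one_lt_inv₀ hε0).mpr hε1
      linarith
    exact (tendsto_const_mul_atTop_of_neg hneg).mpr tendsto_id
  refine ⟨?_, htop, hbot⟩
  obtain ⟨A, hA⟩ := (htop.eventually_ge_atTop (g 0)).exists_forall_of_atTop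
  obtain ⟨B, hB⟩ := (hbot.eventually_ge_atTop (g 0)).exists_forall_of_atBot
  set K := Set.Icc (min B 0) (max A 0) with hK
  have hKc : IsCompact K := isCompact_Icc
  have h0K : (0:ℝ) ∈ K := ⟨min_le_right _ _, le_max_right _ _⟩
  obtain ⟨βs, hβsK, hmin⟩ := hKc.exists_isMinOn ⟨0, h0K⟩ hcont.continuousOn
  have hglobal : ∀ β, g βs ≤ g β := by
    intro β
    by_cases hβ : β ∈ K
    · exact hmin hβ
    · have h0 : g βs ≤ g 0 := hmin h0K
      rcases not_and_or.mp hβ with h | h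
      · push_neg at h
        exact h0.trans (hB β (le_trans h.le (min_le_left _ _)))
      · push_neg at h
        exact h0.trans (hA β (le_trans (le_max_left _ _) h.le))
  exact ⟨βs, le_antisymm (le_ciInf hglobal) (ciInf_le ⟨g βs, fun y ⟨β, hb⟩ => hb ▸ hglobal β⟩ βs)⟩
end

section
/- Let (Ω, 𝓕) be a measurable space, 𝒫 a set of probability measures on (Ω, 𝓕), N a positive natural number, ε₁, …, ε_N ∈ (0,1) with Σ_{n=1}^N ε_n = ε, and X₁, …, X_N : Ω → ℝ random variables each integrable with respect to every P ∈ 𝒫. Suppose for every n ≤ N and every P ∈ 𝒫 there exists β ∈ ℝ with β + ε_n⁻¹ · E_P[max(X_n − β, 0)] ≤ 0. Then for every P ∈ 𝒫, P({ω : X_n(ω) ≤ 0 for all n ≤ N}) ≥ 1 − ε. -/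
/-!
Markov's inequality applied to `max (X - β) 0` at level `-β` turns a CVaR certificate
`β + ε⁻¹ E[max (X - β) 0] ≤ 0` into `P (X > 0) ≤ ε`; when `β = 0` the certificate forces
`X ≤ 0` almost surely. A union bound over the individual violations then gives the joint
constraint with tolerance `∑ εₙ`.
-/

open MeasureTheory

section CVaR

variable {Ω : Type*} [MeasurableSpace Ω] {P : Measure Ω} {X : Ω → ℝ}

lemma measure_pos_eq_zero_of_integral_max_nonpos (hX : Integrable X P)
    (h : ∫ ω, max (X ω) 0 ∂P ≤ 0) : P {ω | 0 < X ω} = 0 := by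
  have hpos_nonneg : 0 ≤ fun ω => max (X ω) 0 := fun ω => le_max_right _ _
  have hpos_ae_zero : (fun ω => max (X ω) 0) =ᵐ[P] 0 :=
    (integral_eq_zero_iff_of_nonneg hpos_nonneg hX.pos_part).1
      (h.antisymm (integral_nonneg hpos_nonneg))
  refine measure_mono_null (fun ω hω => ?_) hpos_ae_zero
  simp only [Set.mem_ofPred_eq, Pi.zero_apply] at hω ⊢
  exact (lt_max_of_lt_left hω).ne'

lemma mul_measureReal_pos_le_integral_max_sub [IsFiniteMeasure P] (hX : Integrable X P)
    {β : ℝ} (hβ : β ≤ 0) : -β * P.real {ω | 0 < X ω} ≤ ∫ ω, max (X ω - β) 0 ∂P := by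
  have hsub : {ω | 0 < X ω} ⊆ {ω | -β ≤ max (X ω - β) 0} := fun ω (hω : 0 < X ω) =>
    show -β ≤ max (X ω - β) 0 from le_max_of_le_left (by linarith)
  calc -β * P.real {ω | 0 < X ω}
      ≤ -β * P.real {ω | -β ≤ max (X ω - β) 0} :=
        mul_le_mul_of_nonneg_left (measureReal_mono hsub) (neg_nonneg.2 hβ)
    _ ≤ ∫ ω, max (X ω - β) 0 ∂P :=
        mul_meas_ge_le_integral_of_nonneg (ae_of_all _ fun _ => le_max_right _ _)
          (hX.sub (integrable_const β)).pos_part (-β)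

lemma measure_pos_le_of_cvar_certificate [IsFiniteMeasure P] (hX : Integrable X P)
    {ε β : ℝ} (hε : 0 < ε) (hβ : β + ε⁻¹ * ∫ ω, max (X ω - β) 0 ∂P ≤ 0) :
    P {ω | 0 < X ω} ≤ ENNReal.ofReal ε := by
  have hI_nonneg : 0 ≤ ∫ ω, max (X ω - β) 0 ∂P :=
    integral_nonneg fun _ => le_max_right _ _
  have hI_le : ∫ ω, max (X ω - β) 0 ∂P ≤ ε * -β := by
    have := mul_le_mul_of_nonneg_left hβ hε.le
    rw [mul_add, mul_inv_cancel_left₀ hε.ne', mul_zero] at this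
    linarith
  rcases (show β ≤ 0 by nlinarith).lt_or_eq with hβ_neg | rfl
  · have hmarkov := (mul_measureReal_pos_le_integral_max_sub hX hβ_neg.le).trans hI_le
    rw [mul_comm ε] at hmarkov
    rw [ENNReal.le_ofReal_iff_toReal_le (measure_ne_top _ _) hε.le]
    exact le_of_mul_le_mul_left hmarkov (neg_pos.2 hβ_neg)
  · simp only [sub_zero, neg_zero, mul_zero] at hI_le
    rw [measure_pos_eq_zero_of_integral_max_nonpos hX hI_le]
    exact zero_le

end CVaR

section Bonferroni

variable {Ω ι : Type*} [MeasurableSpace Ω] {P : Measure Ω} [IsProbabilityMeasure P]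

lemma ofReal_one_sub_le_measure_of_measure_compl_le {s : Set Ω} {ε : ℝ} (hε : 0 ≤ ε)
    (h : P sᶜ ≤ ENNReal.ofReal ε) : ENNReal.ofReal (1 - ε) ≤ P s := by
  rw [ENNReal.ofReal_sub _ hε, ENNReal.ofReal_one, tsub_le_iff_right]
  calc 1 = P Set.univ := measure_univ.symm
    _ ≤ P s + P sᶜ := measure_univ_le_add_compl s
    _ ≤ P s + ENNReal.ofReal ε := add_le_add_right h _

lemma ofReal_one_sub_sum_le_measure_iInter [Fintype ι] {s : ι → Set Ω} {ε : ι → ℝ}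
    (hε : ∀ i, 0 ≤ ε i) (h : ∀ i, P (s i)ᶜ ≤ ENNReal.ofReal (ε i)) :
    ENNReal.ofReal (1 - ∑ i, ε i) ≤ P (⋂ i, s i) := by
  refine ofReal_one_sub_le_measure_of_measure_compl_le (Finset.sum_nonneg fun i _ => hε i) ?_
  calc P (⋂ i, s i)ᶜ = P (⋃ i, (s i)ᶜ) := by rw [Set.compl_iInter]
    _ ≤ ∑ i, P (s i)ᶜ := measure_iUnion_fintype_le _ _
    _ ≤ ∑ i, ENNReal.ofReal (ε i) := Finset.sum_le_sum fun i _ => h i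
    _ = ENNReal.ofReal (∑ i, ε i) := (ENNReal.ofReal_sum_of_nonneg fun i _ => hε i).symm

end Bonferroni

theorem cvar_bonferroni_joint_chance_constraint_general {Ω : Type*} [MeasurableSpace Ω]
    (Ps : Set (Measure Ω)) (hPs : ∀ P ∈ Ps, IsProbabilityMeasure P)
    (N : ℕ)
    (X : Fin N → Ω → ℝ) (hX : ∀ n, ∀ P ∈ Ps, Integrable (X n) P)
    (εs : Fin N → ℝ) (hεs : ∀ n, εs n ∈ Set.Ioo (0 : ℝ) 1)
    (ε : ℝ) (hsum : ∑ n, εs n = ε)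
    (h : ∀ n, ∀ P ∈ Ps, ∃ β : ℝ, β + (εs n)⁻¹ * ∫ ω, max (X n ω - β) 0 ∂P ≤ 0) :
    ∀ P ∈ Ps, ENNReal.ofReal (1 - ε) ≤ P {ω | ∀ n, X n ω ≤ 0} := by
  intro P hP
  have := hPs P hP
  rw [← hsum, Set.ofPred_forall]
  refine ofReal_one_sub_sum_le_measure_iInter (fun n => (hεs n).1.le) fun n => ?_
  obtain ⟨β, hβ⟩ := h n P hP
  simpa only [Set.compl_ofPred, not_le] using
    measure_pos_le_of_cvar_certificate (hX n P hP) (hεs n).1 hβ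

/-- Soundness of the CVaR reformulation of the distributionally robust joint chance
constraint: CVaR-type certificates for each individual constraint (with tolerances εₙ
summing to ε) imply the joint chance constraint P(∀ n, Xₙ ≤ 0) ≥ 1 − ε for all P ∈ Ps. -/
theorem cvar_bonferroni_joint_chance_constraint {Ω : Type*} [MeasurableSpace Ω]
    (Ps : Set (Measure Ω)) (hPs : ∀ P ∈ Ps, IsProbabilityMeasure P)
    (N : ℕ) (hN : 0 < N)
    (X : Fin N → Ω → ℝ) (hX : ∀ n, ∀ P ∈ Ps, Integrable (X n) P)
    (εs : Fin N → ℝ) (hεs : ∀ n, εs n ∈ Set.Ioo (0 : ℝ) 1)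
    (ε : ℝ) (hsum : ∑ n, εs n = ε)
    (h : ∀ n, ∀ P ∈ Ps, ∃ β : ℝ, β + (εs n)⁻¹ * ∫ ω, max (X n ω - β) 0 ∂P ≤ 0) :
    ∀ P ∈ Ps, ENNReal.ofReal (1 - ε) ≤ P {ω | ∀ n, X n ω ≤ 0} :=
  cvar_bonferroni_joint_chance_constraint_general Ps hPs N X hX εs hεs ε hsum h
end
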